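/- arXiv:1503.05572 — 5 statements merged into one kernel-verified Lean document; each statement's English description precedes it below -/
import Mathlib

section
/- Let g and h be continuous real-valued functions on [0,1] such that g has finitely many zeros and ∫₀¹ h·sgn(g) dx ≠ 0. Then there exists a real number λ such that ‖g − λh‖₁ < ‖g‖₁, where ‖f‖₁ = ∫₀¹ |f| dx. -/
/-!
The function `t ↦ ∫ |g - t h|` is differentiable at `t = 0` with derivative `-∫ h sgn(g)`:
pointwise `t ↦ |g x - t h x|` has derivative `-h x sgn(g x)` wherever `g x ≠ 0`, which is almost
everywhere since `g` has finitely many zeros, and it is `|h x|`-Lipschitz, so one may differentiate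
under the integral sign. A nonzero derivative rules out a minimum at `t = 0`.
-/

open MeasureTheory Set

lemma Real.monotone_sign : Monotone Real.sign := by
  intro a b hab
  unfold Real.sign
  split_ifs <;> linarith

lemma Real.measurable_sign : Measurable Real.sign :=
  Real.monotone_sign.measurable

lemma hasDerivAt_abs_sub_mul_zero {a : ℝ} (ha : a ≠ 0) (b : ℝ) :
    HasDerivAt (fun t : ℝ => |a - t * b|) (-(b * Real.sign a)) 0 := by
  have hlin : HasDerivAt (fun t : ℝ => a - t * b) (-b) 0 := by
    simpa using ((hasDerivAt_id (0 : ℝ)).mul_const b).const_sub a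
  rcases ha.lt_or_gt with hneg | hpos
  · exact ((hasDerivAt_abs_neg (by simpa using hneg)).comp (0 : ℝ) hlin).congr_deriv
      (by rw [Real.sign_of_neg hneg]; ring)
  · exact ((hasDerivAt_abs_pos (by simpa using hpos)).comp (0 : ℝ) hlin).congr_deriv
      (by rw [Real.sign_of_pos hpos]; ring)

lemma lipschitzWith_abs_sub_mul (a b : ℝ) :
    LipschitzWith (Real.nnabs b) (fun t : ℝ => |a - t * b|) := by
  refine LipschitzWith.of_dist_le_mul fun s t => ?_
  rw [Real.dist_eq, Real.dist_eq, abs_sub_comm s t, Real.coe_nnabs, ← abs_mul]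
  refine (abs_abs_sub_abs_le_abs_sub _ _).trans_eq ?_
  congr 1
  ring

theorem hasDerivAt_integral_abs_sub_mul {α : Type*} [MeasurableSpace α] {μ : Measure α}
    {g h : α → ℝ} (hg : Integrable g μ) (hh : Integrable h μ) (hg0 : ∀ᵐ x ∂μ, g x ≠ 0) :
    HasDerivAt (fun t => ∫ x, |g x - t * h x| ∂μ) (-∫ x, h x * Real.sign (g x) ∂μ) 0 := by
  have hmeas (t : ℝ) : AEStronglyMeasurable (fun x => |g x - t * h x|) μ :=
    (hg.sub (hh.const_mul t)).abs.aestronglyMeasurable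
  have hF'_meas : AEStronglyMeasurable (fun x => -(h x * Real.sign (g x))) μ :=
    (hh.aemeasurable.mul (Real.measurable_sign.comp_aemeasurable hg.aemeasurable)).neg
      |>.aestronglyMeasurable
  rw [← integral_neg]
  exact (hasDerivAt_integral_of_dominated_loc_of_lip (F := fun t x => |g x - t * h x|)
    Filter.univ_mem (Filter.Eventually.of_forall hmeas) (by simpa using hg.abs) hF'_meas
    (Filter.Eventually.of_forall fun x => (lipschitzWith_abs_sub_mul (g x) (h x)).lipschitzOnWith)
    hh (hg0.mono fun x hx => hasDerivAt_abs_sub_mul_zero hx (h x))).2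

theorem exists_integral_abs_sub_mul_lt {α : Type*} [MeasurableSpace α] {μ : Measure α}
    {g h : α → ℝ} (hg : Integrable g μ) (hh : Integrable h μ) (hg0 : ∀ᵐ x ∂μ, g x ≠ 0)
    (hc : ∫ x, h x * Real.sign (g x) ∂μ ≠ 0) :
    ∃ t : ℝ, ∫ x, |g x - t * h x| ∂μ < ∫ x, |g x| ∂μ := by
  by_contra! hmin
  have hloc : IsLocalMin (fun t => ∫ x, |g x - t * h x| ∂μ) 0 :=
    Filter.Eventually.of_forall fun t => by simpa using hmin t
  exact hc (neg_eq_zero.mp (hloc.hasDerivAt_eq_zero (hasDerivAt_integral_abs_sub_mul hg hh hg0)))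

theorem stmt_0 (g h : ℝ → ℝ)
    (hg : ContinuousOn g (Set.Icc 0 1)) (hh : ContinuousOn h (Set.Icc 0 1))
    (hfin : {x ∈ Set.Icc (0:ℝ) 1 | g x = 0}.Finite)
    (hne : ∫ x in (0:ℝ)..1, h x * Real.sign (g x) ≠ 0) :
    ∃ lam : ℝ, (∫ x in (0:ℝ)..1, |g x - lam * h x|) < ∫ x in (0:ℝ)..1, |g x| := by
  simp only [intervalIntegral.integral_of_le zero_le_one] at hne ⊢
  have hg0 : ∀ᵐ x ∂volume.restrict (Ioc (0:ℝ) 1), g x ≠ 0 := by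
    refine (ae_restrict_iff' measurableSet_Ioc).mpr ?_
    filter_upwards [measure_eq_zero_iff_ae_notMem.mp (hfin.measure_zero volume)] with x hx hxI
    exact fun hgx => hx ⟨Ioc_subset_Icc_self hxI, hgx⟩
  exact exists_integral_abs_sub_mul_lt (hg.integrableOn_Icc.mono_set Ioc_subset_Icc_self)
    (hh.integrableOn_Icc.mono_set Ioc_subset_Icc_self) hg0 hne
end

section
/- Let f be a continuous function on [0,1] and let p be a polynomial of degree at most n that is a best mean approximation to f among polynomials of degree at most n (i.e., ‖f−p‖₁ ≤ ‖f−q‖₁ for all q of degree ≤ n). Then f − p has at least n+1 zeros in [0,1]. -/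
/-!
If `g = f - p` had at most `n` zeros in `[0, 1]`, there would be a nonzero polynomial `q` of degree
at most `n` with `g * q ≥ 0` on `[0, 1]` (a product of `X - z` over the zeros `z` where `g` changes
sign). As `g ≠ 0` almost everywhere, the right derivative of `ε ↦ ‖g - ε q‖₁` at `0` is then
`-‖q‖₁ < 0`, so `p + ε q` approximates `f` strictly better than `p` for small `ε > 0`.
-/

open MeasureTheory Filter Topology Polynomial

theorem IsPreconnected.forall_pos_or_forall_neg {α : Type*} [TopologicalSpace α] {s : Set α}
    {g : α → ℝ} (hs : IsPreconnected s) (hg : ContinuousOn g s) (h0 : ∀ x ∈ s, g x ≠ 0) :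
    (∀ x ∈ s, 0 < g x) ∨ ∀ x ∈ s, g x < 0 := by
  by_contra! h
  obtain ⟨⟨x, hx, hgx⟩, y, hy, hgy⟩ := h
  obtain ⟨z, hz, hgz⟩ := hs.intermediate_value hx hy hg ⟨hgx, hgy⟩
  exact h0 z hz hgz

theorem Set.exists_finset_coe_eq_card_le_of_forall_not_subset {α : Type*} {s : Set α} {n : ℕ}
    (h : ∀ S : Finset α, S.card = n + 1 → ¬ ↑S ⊆ s) : ∃ Z : Finset α, ↑Z = s ∧ Z.card ≤ n := by
  have hfin : s.Finite := by
    by_contra hinf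
    obtain ⟨S, hSs, hS⟩ := Set.Infinite.exists_subset_card_eq hinf (n + 1)
    exact h S hS hSs
  refine ⟨hfin.toFinset, hfin.coe_toFinset, ?_⟩
  by_contra! hn
  obtain ⟨S, hSs, hS⟩ := Finset.exists_subset_card_eq (Nat.succ_le_of_lt hn)
  exact h S hS (by simpa using Finset.coe_subset.2 hSs)

/-- Induction on the largest zero `z`: `g` has constant sign on the part of `s` right of `z`, and
the factor `x - z` enters exactly when that sign disagrees with the product built for the part left
of `z`. -/
theorem exists_mul_prod_sub_mul_nonneg {g : ℝ → ℝ} (Z : Finset ℝ) :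
    ∀ s : Set ℝ, s.OrdConnected → ContinuousOn g s → (∀ x, x ∈ Z ↔ x ∈ s ∧ g x = 0) →
      ∃ S ⊆ Z, ∃ c ≠ (0 : ℝ), ∀ x ∈ s, 0 ≤ c * (∏ y ∈ S, (x - y)) * g x := by
  induction Z using Finset.induction_on_max with
  | empty =>
    intro s hs hg hZ
    have h0 : ∀ x ∈ s, g x ≠ 0 := fun x hx hgx => by simpa using (hZ x).2 ⟨hx, hgx⟩
    rcases hs.isPreconnected.forall_pos_or_forall_neg hg h0 with hpos | hneg
    · exact ⟨∅, subset_rfl, 1, one_ne_zero, fun x hx => by simpa using (hpos x hx).le⟩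
    · exact ⟨∅, subset_rfl, -1, by norm_num, fun x hx => by simpa using (hneg x hx).le⟩
  | insert z Z hlt ih =>
    intro s hs hg hZ
    obtain ⟨hzs, hgz⟩ := (hZ z).1 (Finset.mem_insert_self z Z)
    obtain ⟨S, hSZ, c, hc, hleft⟩ := ih (s ∩ Set.Iio z) (hs.inter Set.ordConnected_Iio)
      (hg.mono Set.inter_subset_left) fun x => by
        constructor
        · intro hx
          exact ⟨⟨((hZ x).1 (Finset.mem_insert_of_mem hx)).1, hlt x hx⟩,
            ((hZ x).1 (Finset.mem_insert_of_mem hx)).2⟩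
        · rintro ⟨⟨hxs, hxz⟩, hgx⟩
          exact (Finset.mem_insert.1 ((hZ x).2 ⟨hxs, hgx⟩)).resolve_left hxz.ne
    have hprod : ∀ x, z < x → 0 < ∏ y ∈ S, (x - y) := fun x hx =>
      Finset.prod_pos fun y hy => sub_pos.2 ((hlt y (hSZ hy)).trans hx)
    have hright : ∀ x ∈ s ∩ Set.Ioi z, c * g x ≠ 0 := fun x hx hgx => by
      have := (hZ x).2 ⟨hx.1, (mul_eq_zero.1 hgx).resolve_left hc⟩
      rcases Finset.mem_insert.1 this with rfl | hxZ
      · exact lt_irrefl x hx.2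
      · exact lt_asymm hx.2 (hlt x hxZ)
    rcases (hs.inter Set.ordConnected_Ioi).isPreconnected.forall_pos_or_forall_neg
      (g := fun x => c * g x) (continuousOn_const.mul (hg.mono Set.inter_subset_left)) hright
      with hpos | hneg
    · refine ⟨S, hSZ.trans (Finset.subset_insert z Z), c, hc, fun x hx => ?_⟩
      rcases lt_trichotomy x z with hxz | rfl | hxz
      · exact hleft x ⟨hx, hxz⟩
      · simp [hgz]
      · have := mul_pos (hprod x hxz) (hpos x ⟨hx, hxz⟩)
        linarith
    · have hzS : z ∉ S := fun hz => lt_irrefl z (hlt z (hSZ hz))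
      refine ⟨insert z S, Finset.insert_subset_insert z hSZ, -c, neg_ne_zero.2 hc, fun x hx => ?_⟩
      rw [Finset.prod_insert hzS]
      rcases lt_trichotomy x z with hxz | rfl | hxz
      · have := mul_nonneg (sub_nonneg.2 hxz.le) (hleft x ⟨hx, hxz⟩)
        linarith
      · simp [hgz]
      · have := mul_pos (sub_pos.2 hxz) (mul_pos (hprod x hxz) (neg_pos.2 (hneg x ⟨hx, hxz⟩)))
        linarith

theorem exists_polynomial_ne_zero_natDegree_le_mul_eval_nonneg {g : ℝ → ℝ} {s : Set ℝ}
    {Z : Finset ℝ} (hs : s.OrdConnected) (hg : ContinuousOn g s)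
    (hZ : ∀ x, x ∈ Z ↔ x ∈ s ∧ g x = 0) :
    ∃ q : ℝ[X], q ≠ 0 ∧ q.natDegree ≤ Z.card ∧ ∀ x ∈ s, 0 ≤ g x * q.eval x := by
  obtain ⟨S, hSZ, c, hc, hcS⟩ := exists_mul_prod_sub_mul_nonneg Z s hs hg hZ
  refine ⟨C c * ∏ y ∈ S, (X - C y), mul_ne_zero (C_ne_zero.2 hc) (monic_prod_X_sub_C id S).ne_zero,
    ?_, fun x hx => ?_⟩
  · rw [natDegree_C_mul hc, natDegree_finsetProd_X_sub_C_eq_card]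
    exact Finset.card_le_card hSZ
  · rw [mul_comm]
    simpa [eval_prod] using hcS x hx

theorem abs_sub_mul_eq_of_mul_nonneg {a b ε : ℝ} (hab : 0 ≤ a * b) (hε : 0 ≤ ε)
    (h : ε * |b| ≤ |a|) : |a - ε * b| = |a| - ε * |b| := by
  rcases abs_cases a with ⟨ha, _⟩ | ⟨ha, _⟩ <;> rcases abs_cases b with ⟨hb, _⟩ | ⟨hb, _⟩ <;>
    rcases abs_cases (a - ε * b) with ⟨hc, _⟩ | ⟨hc, _⟩ <;> rw [ha, hb] at h <;>
    rw [hc, ha, hb] <;> nlinarith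

section Perturbation

variable {α : Type*} [MeasurableSpace α] {μ : Measure α} {g q : α → ℝ}

theorem tendsto_integral_abs_sub_integral_abs_sub_mul_div (hg : Integrable g μ)
    (hq : Integrable q μ) (hsign : ∀ᵐ x ∂μ, 0 ≤ g x * q x) (hg0 : ∀ᵐ x ∂μ, g x ≠ 0) :
    Tendsto (fun ε => ((∫ x, |g x| ∂μ) - ∫ x, |g x - ε * q x| ∂μ) / ε) (𝓝[>] 0)
      (𝓝 (∫ x, |q x| ∂μ)) := by
  have hpert : ∀ ε : ℝ, Integrable (fun x => |g x - ε * q x|) μ := fun ε =>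
    (hg.sub (hq.const_mul ε)).abs
  have hint : ∀ ε : ℝ, Integrable (fun x => |g x| - |g x - ε * q x|) μ := fun ε =>
    hg.abs.sub (hpert ε)
  refine Tendsto.congr (fun ε => ?_) (tendsto_integral_filter_of_dominated_convergence
    (fun x => |q x|) (Eventually.of_forall fun ε => ((hint ε).div_const ε).aestronglyMeasurable)
    ?_ hq.abs ?_)
  · rw [integral_div, integral_sub hg.abs (hpert ε)]
  · filter_upwards [self_mem_nhdsWithin] with ε (hε : 0 < ε)
    refine Eventually.of_forall fun x => ?_
    rw [Real.norm_eq_abs, abs_div, abs_of_pos hε, div_le_iff₀ hε]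
    calc _ ≤ |g x - (g x - ε * q x)| := abs_abs_sub_abs_le_abs_sub _ _
      _ = |q x| * ε := by rw [sub_sub_cancel, abs_mul, abs_of_pos hε, mul_comm]
  · -- once `ε * |q x| ≤ |g x|`, subtracting `ε * q x` shrinks `|g x|` by exactly `ε * |q x|`
    filter_upwards [hsign, hg0] with x hx hx0
    refine tendsto_const_nhds.congr' ?_
    have hbound : 0 < |g x| / (|q x| + 1) := div_pos (abs_pos.2 hx0) (by positivity)
    filter_upwards [Ioo_mem_nhdsGT hbound] with ε ⟨hε, hεg⟩
    have hsmall : ε * |q x| ≤ |g x| := by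
      rw [lt_div_iff₀ (by positivity)] at hεg
      nlinarith [abs_nonneg (q x)]
    rw [abs_sub_mul_eq_of_mul_nonneg hx hε.le hsmall]
    field_simp
    ring

theorem exists_integral_abs_sub_mul_lt_s1 (hg : Integrable g μ) (hq : Integrable q μ)
    (hsign : ∀ᵐ x ∂μ, 0 ≤ g x * q x) (hg0 : ∀ᵐ x ∂μ, g x ≠ 0) (hq0 : 0 < ∫ x, |q x| ∂μ) :
    ∃ ε > 0, ∫ x, |g x - ε * q x| ∂μ < ∫ x, |g x| ∂μ := by
  obtain ⟨ε, hdiff, hε⟩ :=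
    (((tendsto_integral_abs_sub_integral_abs_sub_mul_div hg hq hsign hg0).eventually
      (lt_mem_nhds hq0)).and self_mem_nhdsWithin).exists
  exact ⟨ε, hε, sub_pos.1 ((div_pos_iff_of_pos_right hε).1 hdiff)⟩

end Perturbation

theorem Polynomial.integral_abs_eval_pos {q : ℝ[X]} (hq : q ≠ 0) {a b : ℝ} (hab : a < b) :
    0 < ∫ x in Set.Ioc a b, |q.eval x| := by
  rw [setIntegral_pos_iff_support_of_nonneg_ae (ae_of_all _ fun _ => abs_nonneg _)
    q.continuous.abs.integrableOn_Ioc]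
  have hroots : volume {x | q.IsRoot x} = 0 := (finite_setOfPred_isRoot hq).measure_zero _
  calc 0 < volume (Set.Ioc a b) := by simpa using hab
    _ = volume (Set.Ioc a b \ {x | q.IsRoot x}) := (measure_sdiff_null hroots).symm
    _ ≤ volume ((Function.support fun x => |q.eval x|) ∩ Set.Ioc a b) :=
      measure_mono fun x hx => ⟨by simpa using hx.2, hx.1⟩

theorem stmt_1 (f : ℝ → ℝ) (n : ℕ)
    (hf : ContinuousOn f (Set.Icc 0 1))
    (p : Polynomial ℝ) (hp : p.natDegree ≤ n)
    (hbest : ∀ q : Polynomial ℝ, q.natDegree ≤ n →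
      (∫ x in (0:ℝ)..1, |f x - p.eval x|) ≤ ∫ x in (0:ℝ)..1, |f x - q.eval x|) :
    ∃ S : Finset ℝ, S.card = n + 1 ∧ ∀ x ∈ S, x ∈ Set.Icc (0:ℝ) 1 ∧ f x - p.eval x = 0 := by
  by_contra hfew
  set g : ℝ → ℝ := fun x => f x - p.eval x
  have hg : ContinuousOn g (Set.Icc 0 1) := hf.sub p.continuous.continuousOn
  obtain ⟨Z, hZ, hZn⟩ := Set.exists_finset_coe_eq_card_le_of_forall_not_subset
    (s := {x | x ∈ Set.Icc (0 : ℝ) 1 ∧ g x = 0}) fun S hS hSs => hfew ⟨S, hS, hSs⟩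
  obtain ⟨q, hq0, hqn, hsign⟩ := exists_polynomial_ne_zero_natDegree_le_mul_eval_nonneg
    Set.ordConnected_Icc hg fun x => by rw [← Finset.mem_coe, hZ]; rfl
  have hg0 : ∀ᵐ x ∂volume.restrict (Set.Ioc (0 : ℝ) 1), g x ≠ 0 := by
    filter_upwards [ae_restrict_mem measurableSet_Ioc,
      ae_restrict_of_ae (measure_eq_zero_iff_ae_notMem.1 (Z.finite_toSet.measure_zero volume))]
      with x hx hxZ hgx
    exact hxZ (hZ ▸ ⟨Set.Ioc_subset_Icc_self hx, hgx⟩)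
  obtain ⟨ε, hε, hlt⟩ := exists_integral_abs_sub_mul_lt_s1
    (hg.integrableOn_Icc.mono_set Set.Ioc_subset_Icc_self) q.continuous.integrableOn_Ioc
    ((ae_restrict_mem measurableSet_Ioc).mono fun x hx => hsign x (Set.Ioc_subset_Icc_self hx))
    hg0 (q.integral_abs_eval_pos hq0 zero_lt_one)
  have hbetter := hbest (p + C ε * q)
    (natDegree_add_le_of_degree_le hp ((natDegree_C_mul_le ε q).trans (hqn.trans hZn)))
  simp only [eval_add, eval_mul, eval_C, ← sub_sub, intervalIntegral.integral_of_le zero_le_one]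
    at hbetter
  exact not_le.2 hlt hbetter
end

section
/- Let f be a continuous function on [0,1] with ‖f‖₁ > 0 and let p be a polynomial of degree at most n ≥ 1 with ‖p‖₁ ≤ 2‖f‖₁. Then the function ω_p(ε) = ε/(4n²(n+1)²‖f‖₁) is a modulus of uniform continuity for p on [0,1]: for all ε > 0 and x, y ∈ [0,1] with |x−y| < ω_p(ε), |p(x)−p(y)| < ε. -/
/-!
Expand `p = ∑_{k ≤ n} c_k Q_k` in the Rodrigues polynomials `Q_k = D^k (x² - x)^k`, which are
orthogonal on `[0, 1]` with `∫ Q_k² = k!² / (2k + 1)` (integrate by parts `k` times). On `[0, 1]`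
one has `|Q_k| ≤ k!` and `|Q_k'| ≤ k (k + 1) k!`, so `|c_k| ≤ (2k + 1) / k! · ‖p‖₁` and
`|p'| ≤ ∑_{k ≤ n} (2k + 1) k (k + 1) ‖p‖₁ ≤ 2n²(n + 1)² ‖p‖₁ ≤ 4n²(n + 1)² ‖f‖₁`.
The mean value theorem turns this bound on `p'` into the modulus of continuity.
-/

open Polynomial Nat

noncomputable section

namespace Rodrigues

def S : ℝ[X] := X ^ 2 - X

def L : ℝ[X] := 2 * X - 1

-- `Q k` is `(-1) ^ k * k !` times Mathlib's `shiftedLegendre k`.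
def Q (k : ℕ) : ℝ[X] := derivative^[k] (S ^ k)

theorem derivative_S : derivative S = L := by
  simp only [S, L, derivative_sub, derivative_X_pow, derivative_X]
  norm_num [C_ofNat]

theorem derivative_L : derivative L = 2 := by simp [L]

theorem L_sq : L ^ 2 = 4 * S + 1 := by
  simp only [L, S]
  ring

theorem eval_S_zero : S.eval 0 = 0 := by simp [S]
theorem eval_S_one : S.eval 1 = 0 := by simp [S]
theorem eval_L_zero : L.eval 0 = -1 := by simp [L]
theorem eval_L_one : L.eval 1 = 1 := by norm_num [L]

theorem iterate_derivative_L_mul (m : ℕ) (p : ℝ[X]) :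
    derivative^[m + 1] (L * p) = L * derivative^[m + 1] p + 2 * (m + 1) * derivative^[m] p := by
  induction m generalizing p with
  | zero => simp [derivative_mul, derivative_L]; ring
  | succ m ih =>
    rw [Function.iterate_succ_apply, derivative_mul, derivative_L, iterate_map_add,
      ← C_ofNat, iterate_derivative_C_mul, C_ofNat, ih, ← Function.iterate_succ_apply,
      ← Function.iterate_succ_apply]
    push_cast
    ring

theorem iterate_derivative_S_mul (m : ℕ) (p : ℝ[X]) :
    derivative^[m + 2] (S * p) =
      S * derivative^[m + 2] p + (m + 2) * (L * derivative^[m + 1] p)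
        + (m + 2) * (m + 1) * derivative^[m] p := by
  induction m generalizing p with
  | zero =>
    simp only [Function.iterate_succ_apply, Function.iterate_zero_apply, derivative_mul,
      derivative_S, derivative_L, derivative_add]
    push_cast
    ring
  | succ m ih =>
    rw [Function.iterate_succ_apply, derivative_mul, derivative_S, iterate_map_add,
      iterate_derivative_L_mul, ih, ← Function.iterate_succ_apply, ← Function.iterate_succ_apply,
      ← Function.iterate_succ_apply]
    push_cast
    ring

theorem S_mul_derivative_S_pow (k : ℕ) : S * derivative (S ^ k) = k * (L * S ^ k) := by
  rcases k with _ | k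
  · simp
  · rw [derivative_pow, derivative_S, Nat.add_sub_cancel, ← C_eq_natCast]
    push_cast
    ring

theorem Q_zero : Q 0 = 1 := by simp [Q]

theorem ode_Q (k : ℕ) :
    S * derivative (derivative (Q k)) + L * derivative (Q k) = k * (k + 1) * Q k := by
  rcases k with _ | m
  · simp [Q_zero]
  have h := congrArg (derivative^[m + 2]) (S_mul_derivative_S_pow (m + 1))
  rw [iterate_derivative_S_mul, iterate_derivative_natCast_mul, iterate_derivative_L_mul] at h
  simp only [Q, ← Function.iterate_succ_apply, ← Function.iterate_succ_apply'] at h ⊢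
  push_cast at h ⊢
  linear_combination h

theorem ode_derivative_Q (k : ℕ) :
    S * derivative (derivative (derivative (Q k))) + 2 * (L * derivative (derivative (Q k))) =
      (k * (k + 1) - 2) * derivative (Q k) := by
  have h := congrArg derivative (ode_Q k)
  simp only [derivative_add, derivative_mul, derivative_S, derivative_L, derivative_natCast,
    derivative_one, zero_mul, mul_zero, zero_add] at h
  linear_combination h

theorem exists_iterate_derivative_S_pow_eq (j i : ℕ) :
    ∃ R : ℝ[X], derivative^[j] (S ^ (j + i)) = S ^ i * R ∧
      R.eval 1 = (j + i).descFactorial j ∧ R.eval 0 = (-1) ^ j * (j + i).descFactorial j := by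
  induction j generalizing i with
  | zero => exact ⟨1, by simp⟩
  | succ j ih =>
    obtain ⟨R, hR, hR1, hR0⟩ := ih (i + 1)
    refine ⟨(i + 1) * L * R + S * derivative R, ?_, ?_, ?_⟩
    · rw [Function.iterate_succ_apply', show j + 1 + i = j + (i + 1) by omega, hR,
        derivative_mul, derivative_pow, derivative_S, Nat.add_sub_cancel, C_eq_natCast]
      push_cast
      ring
    all_goals
      rw [Nat.descFactorial_succ, show j + 1 + i = j + (i + 1) by omega,
        show j + (i + 1) - j = i + 1 by omega]
      simp [hR1, hR0, eval_S_zero, eval_S_one, eval_L_zero, eval_L_one]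
    ring

theorem eval_iterate_derivative_S_pow_of_lt {j k : ℕ} (hjk : j < k) :
    (derivative^[j] (S ^ k)).eval 0 = 0 ∧ (derivative^[j] (S ^ k)).eval 1 = 0 := by
  obtain ⟨R, hR, -⟩ := exists_iterate_derivative_S_pow_eq j (k - j)
  rw [Nat.add_sub_cancel' hjk.le] at hR
  obtain ⟨i, hi⟩ := Nat.exists_eq_add_of_lt (Nat.sub_pos_of_lt hjk)
  simp [hR, hi, pow_succ, eval_S_zero, eval_S_one]

theorem eval_Q_one (k : ℕ) : (Q k).eval 1 = k ! := by
  obtain ⟨R, hR, hR1, -⟩ := exists_iterate_derivative_S_pow_eq k 0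
  simp_all [Q, Nat.descFactorial_self]

theorem eval_Q_zero (k : ℕ) : (Q k).eval 0 = (-1) ^ k * k ! := by
  obtain ⟨R, hR, -, hR0⟩ := exists_iterate_derivative_S_pow_eq k 0
  simp_all [Q, Nat.descFactorial_self]

theorem eval_derivative_Q_one (k : ℕ) : (derivative (Q k)).eval 1 = k * (k + 1) * k ! := by
  have h := congrArg (eval 1) (ode_Q k)
  simp only [eval_add, eval_mul, eval_S_one, eval_L_one, eval_Q_one] at h
  simpa using h

theorem eval_derivative_Q_zero (k : ℕ) :
    (derivative (Q k)).eval 0 = -((-1) ^ k * (k * (k + 1) * k !)) := by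
  have h := congrArg (eval 0) (ode_Q k)
  simp [eval_S_zero, eval_L_zero, eval_Q_zero] at h
  linear_combination -h

theorem eval_le_max_of_mul_eval_derivative_nonneg {G : ℝ[X]}
    (hG : ∀ t, 0 ≤ (2 * t - 1) * (derivative G).eval t) {x : ℝ} (hx : x ∈ Set.Icc (0 : ℝ) 1) :
    G.eval x ≤ max (G.eval 0) (G.eval 1) := by
  have hderiv : ∀ t, deriv (fun t => G.eval t) t = (derivative G).eval t := fun t => G.deriv
  rcases le_total x (1 / 2) with h | h
  · refine le_max_of_le_left <| antitoneOn_of_deriv_nonpos (convex_Icc 0 (1 / 2))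
      G.continuous.continuousOn G.differentiable.differentiableOn (fun t ht => ?_)
      (by norm_num) ⟨hx.1, h⟩ hx.1
    rw [interior_Icc] at ht
    nlinarith [hG t, hderiv t, ht.2]
  · refine le_max_of_le_right <| monotoneOn_of_deriv_nonneg (convex_Icc (1 / 2) 1)
      G.continuous.continuousOn G.differentiable.differentiableOn (fun t ht => ?_)
      ⟨h, hx.2⟩ (by norm_num) hx.2
    rw [interior_Icc] at ht
    nlinarith [hG t, hderiv t, ht.1]

/- Sonin's function `G = μ A² - S A'²` satisfies `G' = (2c - 1) L A'²`, so it decreases on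
`[0, 1/2]` and increases on `[1/2, 1]`; and `μ A² ≤ G` on `[0, 1]`, where `S ≤ 0`. -/
theorem sq_eval_le_max_of_ode {A : ℝ[X]} {c μ : ℝ} (hc : 1 ≤ 2 * c) (hμ : 0 < μ)
    (hA : S * derivative (derivative A) + C c * (L * derivative A) = C μ * A)
    {x : ℝ} (hx : x ∈ Set.Icc (0 : ℝ) 1) :
    A.eval x ^ 2 ≤ max (A.eval 0 ^ 2) (A.eval 1 ^ 2) := by
  set G : ℝ[X] := C μ * A ^ 2 - S * derivative A ^ 2
  have hG : derivative G = C (2 * c - 1) * L * derivative A ^ 2 := by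
    simp only [G, derivative_sub, derivative_mul, derivative_C, derivative_sq, derivative_S,
      C_sub, C_mul, C_ofNat, map_one]
    linear_combination (-2 * derivative A) * hA
  have hGx := eval_le_max_of_mul_eval_derivative_nonneg (G := G) (fun t => by
    rw [hG]
    simp only [eval_mul, eval_C, eval_pow, L, eval_sub, eval_X, eval_ofNat, eval_one]
    nlinarith [mul_nonneg (sub_nonneg.2 hc) (sq_nonneg ((2 * t - 1) * (derivative A).eval t))]) hx
  have hS : ∀ t, G.eval t = μ * A.eval t ^ 2 - (t ^ 2 - t) * (derivative A).eval t ^ 2 := by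
    simp [G, S]
  rw [hS, hS, hS] at hGx
  simp only [zero_pow two_ne_zero, one_pow, sub_self, zero_mul, sub_zero] at hGx
  rw [← mul_max_of_nonneg _ _ hμ.le] at hGx
  nlinarith [mul_nonneg (mul_nonneg hx.1 (sub_nonneg.2 hx.2)) (sq_nonneg ((derivative A).eval x))]

theorem abs_eval_Q_le (k : ℕ) {x : ℝ} (hx : x ∈ Set.Icc (0 : ℝ) 1) : |(Q k).eval x| ≤ k ! := by
  rcases k.eq_zero_or_pos with rfl | hk
  · simp [Q_zero]
  refine abs_le_of_sq_le_sq ?_ (by positivity)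
  have hQ : S * derivative (derivative (Q k)) + C 1 * (L * derivative (Q k)) =
      C ((k : ℝ) * (k + 1)) * Q k := by
    simpa using ode_Q k
  simpa [eval_Q_one, eval_Q_zero, mul_pow, ← pow_mul, pow_mul'] using
    sq_eval_le_max_of_ode (by norm_num) (by positivity) hQ hx

theorem abs_eval_derivative_Q_le (k : ℕ) {x : ℝ} (hx : x ∈ Set.Icc (0 : ℝ) 1) :
    |(derivative (Q k)).eval x| ≤ k * (k + 1) * k ! := by
  rcases lt_or_ge k 2 with hk | hk
  · interval_cases k
    · simp [Q_zero]
    · norm_num [Q, derivative_S, derivative_L]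
  refine abs_le_of_sq_le_sq ?_ (by positivity)
  have hQ' : S * derivative (derivative (derivative (Q k))) +
      C 2 * (L * derivative (derivative (Q k))) = C ((k : ℝ) * (k + 1) - 2) * derivative (Q k) := by
    simpa [C_ofNat] using ode_derivative_Q k
  have hμ : (0 : ℝ) < k * (k + 1) - 2 := by
    have : (2 : ℝ) ≤ k := by exact_mod_cast hk
    nlinarith
  simpa [eval_derivative_Q_one, eval_derivative_Q_zero, mul_pow, ← pow_mul, pow_mul'] using
    sq_eval_le_max_of_ode (by norm_num) hμ hQ' hx

theorem integral_eval_mul_eval_derivative (a b : ℝ) (u v : ℝ[X]) :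
    ∫ x in a..b, u.eval x * (derivative v).eval x =
      u.eval b * v.eval b - u.eval a * v.eval a - ∫ x in a..b, (derivative u).eval x * v.eval x :=
  intervalIntegral.integral_mul_deriv_eq_deriv_mul (fun x _ => u.hasDerivAt x)
    (fun x _ => v.hasDerivAt x) ((derivative u).continuous.intervalIntegrable a b)
    ((derivative v).continuous.intervalIntegrable a b)

theorem integral_mul_iterate_derivative_S_pow {j k : ℕ} (hjk : j ≤ k) (s : ℝ[X]) :
    ∫ x in (0 : ℝ)..1, s.eval x * (derivative^[j] (S ^ k)).eval x =
      (-1) ^ j * ∫ x in (0 : ℝ)..1, (derivative^[j] s).eval x * (S ^ k).eval x := by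
  induction j generalizing s with
  | zero => simp
  | succ j ih =>
    obtain ⟨h0, h1⟩ := eval_iterate_derivative_S_pow_of_lt hjk
    rw [Function.iterate_succ_apply', integral_eval_mul_eval_derivative, h0, h1,
      ih (by omega), Function.iterate_succ_apply]
    ring

theorem integral_mul_Q_eq_zero {s : ℝ[X]} {k : ℕ} (hs : s.natDegree < k) :
    ∫ x in (0 : ℝ)..1, s.eval x * (Q k).eval x = 0 := by
  rw [Q, integral_mul_iterate_derivative_S_pow le_rfl, iterate_derivative_eq_zero hs]
  simp

theorem derivative_L_mul_S_pow_succ (k : ℕ) :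
    derivative (L * S ^ (k + 1)) = (4 * k + 6) * S ^ (k + 1) + (k + 1) * S ^ k := by
  rw [derivative_mul, derivative_pow, derivative_S, derivative_L, Nat.add_sub_cancel]
  simp only [Nat.cast_add, Nat.cast_one, map_add, map_natCast, map_one]
  linear_combination (k + 1) * S ^ k * L_sq

-- Integrating `derivative_L_mul_S_pow_succ` gives `(4k + 6) ∫ S^(k+1) = -(k + 1) ∫ S^k`.
theorem integral_S_pow (k : ℕ) :
    ∫ x in (0 : ℝ)..1, (S ^ k).eval x = (-1) ^ k * (k ! ^ 2 / (2 * k + 1)!) := by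
  induction k with
  | zero => simp
  | succ k ih =>
    have hFTC : ∫ x in (0 : ℝ)..1, (derivative (L * S ^ (k + 1))).eval x = 0 := by
      rw [intervalIntegral.integral_eq_sub_of_hasDerivAt (fun x _ => (L * S ^ (k + 1)).hasDerivAt x)
        ((derivative _).continuous.intervalIntegrable 0 1)]
      simp [eval_S_zero, eval_S_one]
    have hint : ∀ p : ℝ[X], IntervalIntegrable (fun x => p.eval x) MeasureTheory.volume 0 1 :=
      fun p => p.continuous.intervalIntegrable 0 1
    simp only [derivative_L_mul_S_pow_succ, eval_add, eval_mul, eval_natCast, eval_ofNat,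
      eval_one] at hFTC
    rw [intervalIntegral.integral_add ((hint _).const_mul _) ((hint _).const_mul _),
      intervalIntegral.integral_const_mul, intervalIntegral.integral_const_mul, ih] at hFTC
    have hfac : ((2 * (k + 1) + 1)! : ℝ) = (2 * k + 3) * (2 * k + 2) * (2 * k + 1)! := by
      rw [show 2 * (k + 1) + 1 = (2 * k + 1) + 1 + 1 by ring, factorial_succ, factorial_succ]
      push_cast
      ring
    rw [hfac, factorial_succ]
    push_cast
    field_simp at hFTC ⊢
    linear_combination hFTC

theorem monic_S : S.Monic := by
  unfold S
  exact monic_X_pow_sub (degree_X_le.trans_lt (by norm_num))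

theorem natDegree_S_pow (k : ℕ) : (S ^ k).natDegree = 2 * k := by
  rw [monic_S.natDegree_pow, S, natDegree_sub_eq_left_of_natDegree_lt] <;> simp [mul_comm]

theorem coeff_iterate_derivative_S_pow (j k : ℕ) (hj : j ≤ 2 * k) :
    (derivative^[j] (S ^ k)).coeff (2 * k - j) = (2 * k).descFactorial j := by
  rw [coeff_iterate_derivative, Nat.sub_add_cancel hj, ← natDegree_S_pow,
    (monic_S.pow k).coeff_natDegree, natDegree_S_pow, nsmul_one]

theorem natDegree_iterate_derivative_S_pow (j k : ℕ) :
    (derivative^[j] (S ^ k)).natDegree ≤ 2 * k - j :=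
  (natDegree_iterate_derivative _ _).trans_eq (by rw [natDegree_S_pow])

theorem coeff_Q_self (k : ℕ) : (Q k).coeff k = (2 * k).descFactorial k := by
  rw [Q, ← coeff_iterate_derivative_S_pow k k (by omega), show 2 * k - k = k by omega]

theorem degree_Q (k : ℕ) : (Q k).degree = k := by
  refine degree_eq_of_le_of_coeff_ne_zero
    (degree_le_of_natDegree_le ((natDegree_iterate_derivative_S_pow k k).trans (by omega))) ?_
  rw [coeff_Q_self, Nat.cast_ne_zero, Ne, Nat.descFactorial_eq_zero_iff_lt]
  omega

theorem iterate_derivative_Q_self (k : ℕ) : derivative^[k] (Q k) = C ((2 * k)! : ℝ) := by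
  rw [Q, ← Function.iterate_add_apply, eq_C_of_natDegree_le_zero
    ((natDegree_iterate_derivative_S_pow _ k).trans (by omega)),
    show 0 = 2 * k - (k + k) by omega, coeff_iterate_derivative_S_pow _ _ (by omega),
    show k + k = 2 * k by omega, Nat.descFactorial_self]

theorem integral_Q_mul_Q_self (k : ℕ) :
    ∫ x in (0 : ℝ)..1, (Q k).eval x * (Q k).eval x = k ! ^ 2 / (2 * k + 1) := by
  rw [Q, integral_mul_iterate_derivative_S_pow le_rfl, ← Q, iterate_derivative_Q_self]
  simp only [eval_C, intervalIntegral.integral_const_mul, integral_S_pow]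
  rw [factorial_succ]
  push_cast
  field_simp
  rw [← pow_mul, pow_mul']
  norm_num

theorem integral_Q_mul_Q_of_ne {j k : ℕ} (hjk : j ≠ k) :
    ∫ x in (0 : ℝ)..1, (Q j).eval x * (Q k).eval x = 0 := by
  have hnat : ∀ i, (Q i).natDegree = i := fun i => natDegree_eq_of_degree_eq_some (degree_Q i)
  rcases hjk.lt_or_gt with h | h
  · exact integral_mul_Q_eq_zero ((hnat j).trans_lt h)
  · simp_rw [mul_comm (eval _ (Q j))]
    exact integral_mul_Q_eq_zero ((hnat k).trans_lt h)

theorem exists_eq_sum_smul_Q {n : ℕ} {p : ℝ[X]} (hp : p.natDegree ≤ n) :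
    ∃ c : ℕ → ℝ, ∑ k ∈ Finset.range (n + 1), c k • Q k = p := by
  let seq : Polynomial.Sequence ℝ := ⟨Q, degree_Q⟩
  have hspan := seq.span_degreeLT (m := n + 1) fun i _ =>
    (leadingCoeff_ne_zero.2 (seq.ne_zero i)).isUnit
  rw [← Finset.coe_range] at hspan
  refine (Submodule.mem_span_image_finset_iff_exists_fun' ℝ).1 ?_
  rw [hspan, mem_degreeLT]
  exact (degree_le_of_natDegree_le hp).trans_lt (by exact_mod_cast Nat.lt_succ_self n)

theorem integral_sum_smul_Q_mul_Q {n j : ℕ} (hj : j ≤ n) (c : ℕ → ℝ) :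
    ∫ x in (0 : ℝ)..1, (∑ k ∈ Finset.range (n + 1), c k • Q k).eval x * (Q j).eval x =
      c j * (j ! ^ 2 / (2 * j + 1)) := by
  simp only [eval_finsetSum, eval_smul, smul_eq_mul, Finset.sum_mul, mul_assoc]
  have hint (k : ℕ) : IntervalIntegrable (fun x => c k * ((Q k).eval x * (Q j).eval x))
      MeasureTheory.volume 0 1 :=
    (continuous_const.mul ((Q k).continuous.mul (Q j).continuous)).intervalIntegrable 0 1
  rw [intervalIntegral.integral_finsetSum fun k _ => hint k]
  simp only [intervalIntegral.integral_const_mul]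
  rw [Finset.sum_eq_single j (fun k _ hkj => by rw [integral_Q_mul_Q_of_ne hkj, mul_zero])
    (fun hj' => absurd (Finset.mem_range.2 (Nat.lt_succ_of_le hj)) hj'), integral_Q_mul_Q_self]

theorem abs_integral_mul_Q_le (p : ℝ[X]) (k : ℕ) :
    |∫ x in (0 : ℝ)..1, p.eval x * (Q k).eval x| ≤ k ! * ∫ x in (0 : ℝ)..1, |p.eval x| := by
  have hint : IntervalIntegrable (fun x => |p.eval x * (Q k).eval x|) MeasureTheory.volume 0 1 :=
    (p.continuous.mul (Q k).continuous).abs.intervalIntegrable 0 1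
  calc |∫ x in (0 : ℝ)..1, p.eval x * (Q k).eval x|
      ≤ ∫ x in (0 : ℝ)..1, |p.eval x * (Q k).eval x| :=
        intervalIntegral.abs_integral_le_integral_abs zero_le_one
    _ ≤ ∫ x in (0 : ℝ)..1, k ! * |p.eval x| :=
        intervalIntegral.integral_mono_on zero_le_one hint
          ((continuous_const.mul p.continuous.abs).intervalIntegrable 0 1) fun x hx => by
            rw [abs_mul, mul_comm]
            exact mul_le_mul_of_nonneg_right (abs_eval_Q_le k hx) (abs_nonneg _)
    _ = k ! * ∫ x in (0 : ℝ)..1, |p.eval x| := intervalIntegral.integral_const_mul _ _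

theorem abs_mul_factorial_le_of_sum_smul_Q_eq {n : ℕ} {p : ℝ[X]} {c : ℕ → ℝ}
    (hc : ∑ k ∈ Finset.range (n + 1), c k • Q k = p) {k : ℕ} (hk : k ≤ n) :
    |c k| * k ! ≤ (2 * k + 1) * ∫ x in (0 : ℝ)..1, |p.eval x| := by
  have h := abs_integral_mul_Q_le p k
  rw [← hc, integral_sum_smul_Q_mul_Q hk, hc, abs_mul,
    abs_of_nonneg (by positivity : (0 : ℝ) ≤ k ! ^ 2 / (2 * k + 1))] at h
  field_simp at h
  exact h

theorem sum_range_succ_two_mul_add_one_mul_le (n : ℕ) :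
    ∑ k ∈ Finset.range (n + 1), (2 * (k : ℝ) + 1) * (k * (k + 1)) ≤ 2 * n ^ 2 * (n + 1) ^ 2 := by
  induction n with
  | zero => simp
  | succ n ih =>
    rw [Finset.sum_range_succ]
    push_cast
    nlinarith [ih, (Nat.cast_nonneg n : (0 : ℝ) ≤ n)]

theorem abs_eval_derivative_le_integral_abs {n : ℕ} {p : ℝ[X]} (hp : p.natDegree ≤ n) {x : ℝ}
    (hx : x ∈ Set.Icc (0 : ℝ) 1) :
    |(derivative p).eval x| ≤ 2 * n ^ 2 * (n + 1) ^ 2 * ∫ t in (0 : ℝ)..1, |p.eval t| := by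
  obtain ⟨c, hc⟩ := exists_eq_sum_smul_Q hp
  set I := ∫ t in (0 : ℝ)..1, |p.eval t|
  have hI : 0 ≤ I := intervalIntegral.integral_nonneg zero_le_one fun _ _ => abs_nonneg _
  calc |(derivative p).eval x|
      = |∑ k ∈ Finset.range (n + 1), c k * (derivative (Q k)).eval x| := by
        simp [← hc, eval_finsetSum]
    _ ≤ ∑ k ∈ Finset.range (n + 1), |c k| * |(derivative (Q k)).eval x| := by
        simpa only [abs_mul] using Finset.abs_sum_le_sum_abs
          (fun k => c k * (derivative (Q k)).eval x) (Finset.range (n + 1))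
    _ ≤ ∑ k ∈ Finset.range (n + 1), (2 * (k : ℝ) + 1) * (k * (k + 1)) * I := by
        refine Finset.sum_le_sum fun k hk => ?_
        have hck :=
          abs_mul_factorial_le_of_sum_smul_Q_eq hc (Nat.lt_succ_iff.1 (Finset.mem_range.1 hk))
        calc |c k| * |(derivative (Q k)).eval x| ≤ |c k| * (k * (k + 1) * k !) :=
              mul_le_mul_of_nonneg_left (abs_eval_derivative_Q_le k hx) (abs_nonneg _)
          _ = k * (k + 1) * (|c k| * k !) := by ring
          _ ≤ k * (k + 1) * ((2 * k + 1) * I) := by gcongr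
          _ = (2 * (k : ℝ) + 1) * (k * (k + 1)) * I := by ring
    _ = (∑ k ∈ Finset.range (n + 1), (2 * (k : ℝ) + 1) * (k * (k + 1))) * I := by
        rw [Finset.sum_mul]
    _ ≤ 2 * n ^ 2 * (n + 1) ^ 2 * I := by
        gcongr
        exact sum_range_succ_two_mul_add_one_mul_le n

end Rodrigues

theorem stmt_9_general (f : ℝ → ℝ) (n : ℕ)
    (p : Polynomial ℝ) (hp : p.natDegree ≤ n)
    (hpQ : (∫ x in (0:ℝ)..1, |p.eval x|) ≤ 2 * ∫ x in (0:ℝ)..1, |f x|) :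
    ∀ ε : ℝ, 0 < ε → ∀ x ∈ Set.Icc (0:ℝ) 1, ∀ y ∈ Set.Icc (0:ℝ) 1,
      |x - y| < ε / (4 * n ^ 2 * (n + 1) ^ 2 * ∫ t in (0:ℝ)..1, |f t|) →
      |p.eval x - p.eval y| < ε := by
  intro ε hε x hx y hy hxy
  set M := 4 * (n : ℝ) ^ 2 * (n + 1) ^ 2 * ∫ t in (0:ℝ)..1, |f t|
  have hF : 0 ≤ ∫ t in (0:ℝ)..1, |f t| :=
    intervalIntegral.integral_nonneg zero_le_one fun _ _ => abs_nonneg _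
  -- if `M = 0` then `ε / M = 0` and the hypothesis on `|x - y|` is void
  have hM : 0 < M := by
    refine lt_of_le_of_ne (mul_nonneg (by positivity) hF) fun h => ?_
    rw [← h, div_zero] at hxy
    exact (abs_nonneg _).not_gt hxy
  have hderiv : ∀ z ∈ Set.Icc (0 : ℝ) 1, ‖(derivative p).eval z‖ ≤ M := fun z hz =>
    (Rodrigues.abs_eval_derivative_le_integral_abs hp hz).trans <| by
      unfold M
      linarith [mul_le_mul_of_nonneg_left hpQ (by positivity : (0 : ℝ) ≤ 2 * n ^ 2 * (n + 1) ^ 2)]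
  calc |p.eval x - p.eval y|
      ≤ M * |x - y| := (convex_Icc 0 1).norm_image_sub_le_of_norm_hasDerivWithin_le
        (fun z _ => (p.hasDerivAt z).hasDerivWithinAt) hderiv hy hx
    _ < M * (ε / M) := by gcongr
    _ = ε := mul_div_cancel₀ ε hM.ne'

theorem stmt_9 (f : ℝ → ℝ) (n : ℕ) (hn : 1 ≤ n)
    (hf : ContinuousOn f (Set.Icc 0 1))
    (hf1 : 0 < ∫ x in (0:ℝ)..1, |f x|)
    (p : Polynomial ℝ) (hp : p.natDegree ≤ n)
    (hpQ : (∫ x in (0:ℝ)..1, |p.eval x|) ≤ 2 * ∫ x in (0:ℝ)..1, |f x|) :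
    ∀ ε : ℝ, 0 < ε → ∀ x ∈ Set.Icc (0:ℝ) 1, ∀ y ∈ Set.Icc (0:ℝ) 1,
      |x - y| < ε / (4 * n ^ 2 * (n + 1) ^ 2 * ∫ t in (0:ℝ)..1, |f t|) →
      |p.eval x - p.eval y| < ε :=
  stmt_9_general f n p hp hpQ
end
end

section
/- Let (aₙ) be a nonincreasing sequence of nonnegative reals bounded above by B. Then for every ε > 0 and every function F : ℕ → ℕ there exists n of the form F^{(k)}(0) with k ≤ ⌈B/ε⌉ such that for all m with n ≤ m ≤ F(n), a_n − a_m < ε. -/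
theorem stmt_18 (a : ℕ → ℝ) (B : ℝ) (ha : Antitone a)
    (hnn : ∀ n, 0 ≤ a n) (hB : ∀ n, a n ≤ B) :
    ∀ ε : ℝ, 0 < ε → ∀ F : ℕ → ℕ,
      ∃ n, (∃ k ≤ ⌈B / ε⌉₊, n = F^[k] 0) ∧
        ∀ m, n ≤ m → m ≤ F n → a n - a m < ε := by
  intro ε hε F
  set K := ⌈B / ε⌉₊ with hK
  by_contra h
  push_neg at h
  have key : ∀ k ≤ K, ε ≤ a (F^[k] 0) - a (F^[k+1] 0) := by
    intro k hk
    obtain ⟨m, hm1, hm2, hm3⟩ := h (F^[k] 0) ⟨k, hk, rfl⟩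
    have h4 : a (F^[k+1] 0) ≤ a m := by
      rw [Function.iterate_succ_apply']; exact ha hm2
    linarith
  have tele : ∀ j, j ≤ K + 1 → (j : ℝ) * ε ≤ a (F^[0] 0) - a (F^[j] 0) := by
    intro j hj
    induction j with
    | zero => simp
    | succ n ih =>
      have h1 := ih (Nat.le_of_succ_le hj)
      have h2 := key n (Nat.lt_succ_iff.mp hj)
      push_cast
      linarith
  have htop := tele (K + 1) le_rfl
  have hB0 := hB 0
  have hnn' := hnn (F^[K+1] 0)
  have hKe : B ≤ (K : ℝ) * ε := by
    have hle : B / ε ≤ (K : ℝ) := Nat.le_ceil (B / ε)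
    calc B = B / ε * ε := by field_simp
    _ ≤ (K : ℝ) * ε := by nlinarith
  simp only [Function.iterate_zero_apply] at htop
  push_cast at htop
  linarith
end

section
/- Let (K,d) be a compact metric space and f : K → K contractive, i.e., d(f(x),f(y)) < d(x,y) for all x ≠ y. Then f has a unique fixed point c, and for every x ∈ K the iteration sequence x₀ = x, x_{k+1} = f(x_k) converges to c. -/
theorem stmt_19 (K : Type*) [MetricSpace K] [CompactSpace K] [Nonempty K]
    (f : K → K) (hf : ∀ x y : K, x ≠ y → dist (f x) (f y) < dist x y) :
    ∃ c : K, f c = c ∧ (∀ c' : K, f c' = c' → c' = c) ∧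
      ∀ x : K, Filter.Tendsto (fun k => f^[k] x) Filter.atTop (nhds c) := by
  have hle : ∀ x y : K, dist (f x) (f y) ≤ dist x y := by
    intro x y
    rcases eq_or_ne x y with rfl | h
    · simp
    · exact (hf x y h).le
  have hcont : Continuous f := by
    refine (LipschitzWith.of_dist_le_mul (K := 1) ?_).continuous
    intro x y; simpa using hle x y
  obtain ⟨c, -, hc⟩ := isCompact_univ.exists_isMinOn (Set.univ_nonempty)
    ((continuous_id.dist hcont).continuousOn (s := Set.univ))
  have hfc : f c = c := by
    by_contra h
    have h1 : dist (f c) (f (f c)) < dist c (f c) := hf c (f c) (fun e => h e.symm)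
    have h2 : dist c (f c) ≤ dist (f c) (f (f c)) := hc (Set.mem_univ (f c))
    linarith
  refine ⟨c, hfc, ?_, ?_⟩
  · intro c' hc'
    by_contra h
    have := hf c' c h
    rw [hc', hfc] at this
    exact lt_irrefl _ this
  · intro x
    set u : ℕ → K := fun k => f^[k] x with hu
    set a : ℕ → ℝ := fun k => dist (u k) c with ha
    have hsucc : ∀ k, u (k + 1) = f (u k) := by
      intro k; simp [hu, Function.iterate_succ_apply']
    have hanti : Antitone a := by
      refine antitone_nat_of_succ_le fun k => ?_
      have := hle (u k) c
      rw [hfc] at this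
      simpa [ha, hsucc k] using this
    have hbdd : BddBelow (Set.range a) :=
      ⟨0, by rintro _ ⟨k, rfl⟩; exact dist_nonneg⟩
    set L : ℝ := ⨅ k, a k with hL
    have haL : Filter.Tendsto a Filter.atTop (nhds L) :=
      tendsto_atTop_ciInf hanti hbdd
    obtain ⟨y, -, φ, hφ, hy⟩ := isCompact_univ.tendsto_subseq (fun n => Set.mem_univ (u n))
    have h1 : Filter.Tendsto (a ∘ φ) Filter.atTop (nhds (dist y c)) :=
      hy.dist tendsto_const_nhds
    have h2 : Filter.Tendsto (a ∘ φ) Filter.atTop (nhds L) :=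
      haL.comp hφ.tendsto_atTop
    have hyL : dist y c = L := tendsto_nhds_unique h1 h2
    have h3 : Filter.Tendsto (fun n => u (φ n + 1)) Filter.atTop (nhds (f y)) := by
      have : Filter.Tendsto (fun n => f (u (φ n))) Filter.atTop (nhds (f y)) :=
        (hcont.tendsto y).comp hy
      simpa [hsucc] using this
    have h4 : Filter.Tendsto (fun n => a (φ n + 1)) Filter.atTop (nhds (dist (f y) c)) :=
      h3.dist tendsto_const_nhds
    have h5 : Filter.Tendsto (fun n => a (φ n + 1)) Filter.atTop (nhds L) :=
      haL.comp ((Filter.tendsto_add_atTop_nat 1).comp hφ.tendsto_atTop)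
    have hfyL : dist (f y) c = L := tendsto_nhds_unique h4 h5
    have hyc : y = c := by
      by_contra h
      have := hf y c h
      rw [hfc] at this
      rw [hfyL, hyL] at this
      exact lt_irrefl _ this
    have hL0 : L = 0 := by rw [← hyL, hyc, dist_self]
    rw [tendsto_iff_dist_tendsto_zero]
    simpa [hL0] using haL
end
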